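/- Fix ξ ∈ ℝ, let α = ξ and ν = ξ², let u be a normalized (α,ξ,ν)-eigenfunction, and let k₀(t) := ( −ξ/2 + (2/3)(ξ−t) ) u(t) + ( (2/3)(1−ξ²) + ξ(ξ−t) − (1/3)(ξ−t)² ) u'(t). Then ∫₀^∞ (C_ξ u)(t) k₀(t) dt + ∫₀^∞ (C_{ξ,2} u)(t) u(t) dt = (ξ/6) u(0)². -/

import Mathlib

open MeasureTheory

/-- An `(α,ξ,ν)`-eigenfunction: a smooth function on `ℝ` which, together with all its
derivatives, decays faster than any polynomial on `[0,∞)`, solves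
`−u'' + ((ξ−t)² + 1)u = νu` on `[0,∞)`, and satisfies the Robin condition
`u'(0) = (α−ξ)u(0)`. -/
def IsEigen (α ξ ν : ℝ) (u : ℝ → ℝ) : Prop :=
  ContDiff ℝ (⊤ : ℕ∞) u ∧
  (∀ n k : ℕ, ∃ C : ℝ, ∀ t : ℝ, 0 ≤ t → |t| ^ k * |iteratedDeriv n u t| ≤ C) ∧
  (∀ t : ℝ, 0 ≤ t → -(deriv (deriv u) t) + ((ξ - t) ^ 2 + 1) * u t = ν * u t) ∧
  deriv u 0 = (α - ξ) * u 0

/-- The operator `C_ξ w = 2( t·(n₀w) − ξw − w' + t²(ξ−t)w )`, where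
`(n₀w)(t) = −w''(t) + ((ξ−t)² + 1)w(t)`. -/
noncomputable def Cxi (ξ : ℝ) (w : ℝ → ℝ) (t : ℝ) : ℝ :=
  2 * (t * (-(deriv (deriv w) t) + ((ξ - t) ^ 2 + 1) * w t)
    - ξ * w t - deriv w t + t ^ 2 * (ξ - t) * w t)

/-- The operator
`C_{ξ,2} w = −4t(w' + (ξ−t)w) + 2t²(n₀w) + (8/3)(ξ−t)t³w − 4t²w + t⁴w`. -/
noncomputable def Cxi2 (ξ : ℝ) (w : ℝ → ℝ) (t : ℝ) : ℝ :=
  -4 * t * (deriv w t + (ξ - t) * w t)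
    + 2 * t ^ 2 * (-(deriv (deriv w) t) + ((ξ - t) ^ 2 + 1) * w t)
    + 8 / 3 * (ξ - t) * t ^ 3 * w t - 4 * t ^ 2 * w t + t ^ 4 * w t

/-- The explicit corrector
`k₀ = (−ξ/2 + (2/3)(ξ−t))u + ((2/3)(1−ξ²) + ξ(ξ−t) − (1/3)(ξ−t)²)u'`. -/
noncomputable def kzero (ξ : ℝ) (u : ℝ → ℝ) (t : ℝ) : ℝ :=
  (-ξ / 2 + 2 / 3 * (ξ - t)) * u t
    + (2 / 3 * (1 - ξ ^ 2) + ξ * (ξ - t) - 1 / 3 * (ξ - t) ^ 2) * deriv u t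

/-!
On `[0, ∞)` the eigenvalue equation reads `u'' = V u` with `V = (t - ξ)² + 1 - ξ²`, so the
integrand `(C_ξ u) k₀ + (C_{ξ,2} u) u` is a quadratic form in `(u, u')` with polynomial
coefficients `P, Q, R`. It is the exact derivative of `F = A u² + B u u' + C u'²`, where the
polynomials `A, B, C` (of degrees 4, 2, 3) solve `A' + B V = P`, `2A + B' + 2C V = Q`,
`B + C' = R`. Rapid decay of `u` and `u'` kills `F` at infinity, so the
integral is `-F(0)`, and the Robin condition `u'(0) = 0` leaves `-A(0) u(0)² = (ξ/6) u(0)²`.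
-/

open Filter Asymptotics Polynomial Set Topology

section Decay

variable {f : ℝ → ℝ}

theorem superpolynomialDecay_of_forall_bound
    (h : ∀ k : ℕ, ∃ C : ℝ, ∀ t : ℝ, 0 ≤ t → |t| ^ k * |f t| ≤ C) :
    SuperpolynomialDecay atTop id f := by
  refine (superpolynomialDecay_iff_abs_isBoundedUnder f tendsto_id).2 fun k => ?_
  obtain ⟨C, hC⟩ := h k
  refine isBoundedUnder_of_eventually_le (a := C) ?_
  filter_upwards [eventually_ge_atTop 0] with t ht
  simpa [abs_mul, abs_pow] using hC t ht

theorem Asymptotics.SuperpolynomialDecay.tendsto_zero (hf : SuperpolynomialDecay atTop id f) :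
    Tendsto f atTop (𝓝 0) := by
  simpa using hf 0

theorem Asymptotics.SuperpolynomialDecay.integrableOn_Ioi (hf : SuperpolynomialDecay atTop id f)
    {a : ℝ} (hc : ContinuousOn f (Ici a)) : IntegrableOn f (Ioi a) := by
  have hO : f =O[atTop] fun t : ℝ => t ^ (-2 : ℝ) := by
    refine ((superpolynomialDecay_iff_isBigO f tendsto_id).1 hf (-2)).congr_right fun t => ?_
    simp
  refine (hc.locallyIntegrableOn measurableSet_Ici).integrableOn_of_isBigO_atTop hO ?_
    |>.mono_set Ioi_subset_Ici_self
  exact integrableAtFilter_rpow_atTop_iff.2 (by norm_num)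

end Decay

noncomputable def polyQuadForm (A B C : ℝ[X]) (u : ℝ → ℝ) (t : ℝ) : ℝ :=
  A.eval t * u t ^ 2 + B.eval t * (u t * deriv u t) + C.eval t * deriv u t ^ 2

section PolyQuadForm

variable {u : ℝ → ℝ}

theorem hasDerivAt_polyQuadForm (A B C V : ℝ[X]) {t : ℝ} (hu : HasDerivAt u (deriv u t) t)
    (hu' : HasDerivAt (deriv u) (V.eval t * u t) t) :
    HasDerivAt (polyQuadForm A B C u)
      (polyQuadForm (derivative A + B * V) (2 * A + derivative B + 2 * C * V)
        (B + derivative C) u t) t := by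
  have h := (((A.hasDerivAt t).mul (hu.pow 2)).add ((B.hasDerivAt t).mul (hu.mul hu'))).add
    ((C.hasDerivAt t).mul (hu'.pow 2))
  refine h.congr_deriv ?_
  simp only [polyQuadForm, eval_add, eval_mul, eval_ofNat, Pi.mul_apply, Pi.pow_apply]
  ring

theorem continuous_polyQuadForm (A B C : ℝ[X]) (hu : Continuous u)
    (hu' : Continuous (deriv u)) : Continuous (polyQuadForm A B C u) :=
  ((A.continuous.mul (hu.pow 2)).add (B.continuous.mul (hu.mul hu'))).add
    (C.continuous.mul (hu'.pow 2))

theorem superpolynomialDecay_polyQuadForm (A B C : ℝ[X])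
    (hu : SuperpolynomialDecay atTop id u) (hu' : SuperpolynomialDecay atTop id (deriv u)) :
    SuperpolynomialDecay atTop id (polyQuadForm A B C u) :=
  (((hu.mul hu).polynomial_mul A).add ((hu.mul hu').polynomial_mul B)).add
    ((hu'.mul hu').polynomial_mul C) |>.congr fun t => by simp [polyQuadForm, sq]

theorem integral_Ioi_polyQuadForm (A B C V : ℝ[X]) {a : ℝ} (hu : ContDiff ℝ 2 u)
    (hu_decay : SuperpolynomialDecay atTop id u)
    (hu'_decay : SuperpolynomialDecay atTop id (deriv u))
    (hode : ∀ t, a ≤ t → deriv (deriv u) t = V.eval t * u t) :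
    ∫ t in Ioi a, polyQuadForm (derivative A + B * V) (2 * A + derivative B + 2 * C * V)
        (B + derivative C) u t = -polyQuadForm A B C u a := by
  have hderiv t (ht : t ∈ Ici a) := hasDerivAt_polyQuadForm A B C V
    (hu.differentiable two_ne_zero t).hasDerivAt
    (hode t ht ▸ (hu.differentiable_deriv_two t).hasDerivAt)
  have hcont : Continuous (deriv u) := hu.continuous_deriv one_le_two
  rw [integral_Ioi_of_hasDerivAt_of_tendsto' hderiv ?_
    (superpolynomialDecay_polyQuadForm A B C hu_decay hu'_decay).tendsto_zero, zero_sub]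
  exact (superpolynomialDecay_polyQuadForm _ _ _ hu_decay hu'_decay).integrableOn_Ioi
    (continuous_polyQuadForm _ _ _ hu.continuous hcont).continuousOn

end PolyQuadForm

noncomputable def eigenPotential (ξ ν : ℝ) : ℝ[X] := (X - C ξ) ^ 2 + C (1 - ν)

namespace IsEigen

variable {α ξ ν : ℝ} {u : ℝ → ℝ}

theorem superpolynomialDecay_iteratedDeriv (hu : IsEigen α ξ ν u) (n : ℕ) :
    SuperpolynomialDecay atTop id (iteratedDeriv n u) :=
  superpolynomialDecay_of_forall_bound (hu.2.1 n)

theorem deriv_deriv_eq (hu : IsEigen α ξ ν u) {t : ℝ} (ht : 0 ≤ t) :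
    deriv (deriv u) t = (eigenPotential ξ ν).eval t * u t := by
  have := hu.2.2.1 t ht
  simp only [eigenPotential, eval_add, eval_pow, eval_sub, eval_X, eval_C]
  linear_combination -this

end IsEigen

section Operators

variable {ξ : ℝ} {u : ℝ → ℝ}

theorem superpolynomialDecay_Cxi (h₀ : SuperpolynomialDecay atTop id u)
    (h₁ : SuperpolynomialDecay atTop id (deriv u))
    (h₂ : SuperpolynomialDecay atTop id (deriv (deriv u))) :
    SuperpolynomialDecay atTop id (Cxi ξ u) :=
  ((h₀.polynomial_mul (2 * (X * ((C ξ - X) ^ 2 + 1) - C ξ + X ^ 2 * (C ξ - X)))).add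
    ((h₁.polynomial_mul (-2)).add (h₂.polynomial_mul (-2 * X)))).congr fun t => by
      simp only [Cxi, Pi.add_apply, id_eq, eval_add, eval_sub, eval_neg, eval_mul, eval_pow,
        eval_X, eval_C, eval_one, eval_ofNat]
      ring

theorem superpolynomialDecay_kzero (h₀ : SuperpolynomialDecay atTop id u)
    (h₁ : SuperpolynomialDecay atTop id (deriv u)) :
    SuperpolynomialDecay atTop id (kzero ξ u) :=
  ((h₀.polynomial_mul (C (-ξ / 2) + C (2 / 3) * (C ξ - X))).add
    (h₁.polynomial_mul
      (C (2 / 3 * (1 - ξ ^ 2)) + C ξ * (C ξ - X) - C (1 / 3) * (C ξ - X) ^ 2)))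
    |>.congr fun t => by simp [kzero]

theorem superpolynomialDecay_Cxi2 (h₀ : SuperpolynomialDecay atTop id u)
    (h₁ : SuperpolynomialDecay atTop id (deriv u))
    (h₂ : SuperpolynomialDecay atTop id (deriv (deriv u))) :
    SuperpolynomialDecay atTop id (Cxi2 ξ u) :=
  ((h₀.polynomial_mul (-4 * X * (C ξ - X) + 2 * X ^ 2 * ((C ξ - X) ^ 2 + 1)
      + C (8 / 3) * (C ξ - X) * X ^ 3 - 4 * X ^ 2 + X ^ 4)).add
    ((h₁.polynomial_mul (-4 * X)).add (h₂.polynomial_mul (-2 * X ^ 2)))).congr fun t => by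
      simp only [Cxi2, Pi.add_apply, id_eq, eval_add, eval_sub, eval_neg, eval_mul, eval_pow,
        eval_X, eval_C, eval_one, eval_ofNat]
      ring

end Operators

noncomputable def primitiveCoeffA (ξ : ℝ) : ℝ[X] :=
  C (-ξ / 6) + C ((1 - ξ ^ 2) / 6) * X - C (4 * ξ / 3) * X ^ 2 + C ((1 + ξ ^ 2) / 6) * X ^ 3
    + C (ξ / 6) * X ^ 4

noncomputable def primitiveCoeffB (ξ : ℝ) : ℝ[X] :=
  -C ((1 + ξ ^ 2) / 6) - C (ξ / 3) * X - C (1 / 3) * X ^ 2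

noncomputable def primitiveCoeffC (ξ : ℝ) : ℝ[X] :=
  C (-ξ / 2) + C ((ξ ^ 2 - 7) / 6) * X + C (ξ / 2) * X ^ 2 + C (1 / 3) * X ^ 3

theorem Cxi_mul_kzero_add_Cxi2_mul_self {ξ t : ℝ} {u : ℝ → ℝ}
    (hu : deriv (deriv u) t = (eigenPotential ξ (ξ ^ 2)).eval t * u t) :
    Cxi ξ u t * kzero ξ u t + Cxi2 ξ u t * u t =
      polyQuadForm
        (derivative (primitiveCoeffA ξ) + primitiveCoeffB ξ * eigenPotential ξ (ξ ^ 2))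
        (2 * primitiveCoeffA ξ + derivative (primitiveCoeffB ξ)
          + 2 * primitiveCoeffC ξ * eigenPotential ξ (ξ ^ 2))
        (primitiveCoeffB ξ + derivative (primitiveCoeffC ξ)) u t := by
  simp only [Cxi, Cxi2, kzero, polyQuadForm, hu, eigenPotential, primitiveCoeffA, primitiveCoeffB,
    primitiveCoeffC, derivative_neg, derivative_mul, derivative_C,
    derivative_X, derivative_X_pow_succ, map_add, map_sub, map_one, map_pow, eval_add, eval_sub,
    eval_neg, eval_mul, eval_pow, eval_X, eval_C, eval_one, eval_ofNat, zero_mul, zero_add, mul_one,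
    zero_sub, neg_zero, Nat.cast_one, Nat.cast_ofNat, pow_one]
  ring

theorem Cxi_combined_expectation_general
    (ξ : ℝ) (u : ℝ → ℝ) (hu : IsEigen ξ ξ (ξ ^ 2) u) :
    (∫ t in Set.Ioi (0 : ℝ), Cxi ξ u t * kzero ξ u t)
        + (∫ t in Set.Ioi (0 : ℝ), Cxi2 ξ u t * u t)
      = ξ / 6 * u 0 ^ 2 := by
  have h₀ : SuperpolynomialDecay atTop id u := by
    simpa using hu.superpolynomialDecay_iteratedDeriv 0
  have h₁ : SuperpolynomialDecay atTop id (deriv u) := by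
    simpa using hu.superpolynomialDecay_iteratedDeriv 1
  have h₂ : SuperpolynomialDecay atTop id (deriv (deriv u)) := by
    simpa [iteratedDeriv_succ] using hu.superpolynomialDecay_iteratedDeriv 2
  have hc₀ : Continuous u := hu.1.continuous
  have hc₁ : Continuous (deriv u) := (hu.1.iterate_deriv 1).continuous
  have hc₂ : Continuous (deriv (deriv u)) := (hu.1.iterate_deriv 2).continuous
  have hint₁ : IntegrableOn (fun t => Cxi ξ u t * kzero ξ u t) (Ioi 0) :=
    ((superpolynomialDecay_Cxi h₀ h₁ h₂).mul (superpolynomialDecay_kzero h₀ h₁))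
      |>.integrableOn_Ioi (by unfold Cxi kzero; fun_prop)
  have hint₂ : IntegrableOn (fun t => Cxi2 ξ u t * u t) (Ioi 0) :=
    ((superpolynomialDecay_Cxi2 h₀ h₁ h₂).mul h₀).integrableOn_Ioi
      (by unfold Cxi2; fun_prop)
  rw [← integral_add hint₁ hint₂, setIntegral_congr_fun measurableSet_Ioi fun t ht =>
      Cxi_mul_kzero_add_Cxi2_mul_self (hu.deriv_deriv_eq (le_of_lt ht)),
    integral_Ioi_polyQuadForm _ _ _ _ (hu.1.of_le (WithTop.coe_le_coe.2 le_top)) h₀ h₁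
      fun t ht => hu.deriv_deriv_eq ht]
  have hrobin : deriv u 0 = 0 := by simpa using hu.2.2.2
  simp only [polyQuadForm, primitiveCoeffA, primitiveCoeffB, primitiveCoeffC, hrobin, eval_add,
    eval_sub, eval_neg, eval_mul, eval_pow, eval_X, eval_C]
  ring

/-- For a normalized `(ξ,ξ,ξ²)`-eigenfunction `u`,
`∫₀^∞ (C_ξ u) k₀ dt + ∫₀^∞ (C_{ξ,2} u) u dt = (ξ/6)u(0)²`. -/
theorem Cxi_combined_expectation
    (ξ : ℝ) (u : ℝ → ℝ) (hu : IsEigen ξ ξ (ξ ^ 2) u)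
    (hnorm : ∫ t in Set.Ioi (0 : ℝ), u t ^ 2 = 1) :
    (∫ t in Set.Ioi (0 : ℝ), Cxi ξ u t * kzero ξ u t)
        + (∫ t in Set.Ioi (0 : ℝ), Cxi2 ξ u t * u t)
      = ξ / 6 * u 0 ^ 2 :=
  Cxi_combined_expectation_general ξ u hu
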